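/- arXiv:1711.09459 — 7 statements merged into one kernel-verified Lean document; each statement's English description precedes it below -/
import Mathlib

section
/- Let G = (G_1,…,G_g) be a linearly independent tuple of d×e complex matrices, let C be an e×d complex matrix, and let Ψ = (Ψ_1,…,Ψ_g) be a tuple of g×g complex matrices such that G_ℓ C G_j = Σ_{s=1}^g (Ψ_j)_{ℓ,s} G_s for all 1 ≤ ℓ, j ≤ g. Then Ψ is convexotonic, i.e., Ψ_k Ψ_j = Σ_{s=1}^g (Ψ_j)_{k,s} Ψ_s for all 1 ≤ j,k ≤ g. In particular, if J = (J_1,…,J_g) ∈ M_d(ℂ)^g is linearly independent and the span of J_1,…,J_g is closed under multiplication, then the unique tuple Ψ determined by J_k J_j = Σ_{s=1}^g (Ψ_j)_{k,s} J_s is convexotonic. -/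
open scoped Kronecker Matrix Matrix.Norms.L2Operator ComplexOrder

noncomputable section

/-- `Λ_A(X) = Σⱼ Aⱼ ⊗ Xⱼ` (Kronecker product), a `dn × dn` matrix. -/
def lamK {g d n : ℕ} (A : Fin g → Matrix (Fin d) (Fin d) ℂ)
    (X : Fin g → Matrix (Fin n) (Fin n) ℂ) :
    Matrix (Fin d × Fin n) (Fin d × Fin n) ℂ :=
  ∑ j, (A j) ⊗ₖ (X j)

/-- `L_A(X) = I + Λ_A(X) + Λ_A(X)^*`. -/
def Lpen {g d n : ℕ} (A : Fin g → Matrix (Fin d) (Fin d) ℂ)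
    (X : Fin g → Matrix (Fin n) (Fin n) ℂ) :
    Matrix (Fin d × Fin n) (Fin d × Fin n) ℂ :=
  1 + lamK A X + (lamK A X)ᴴ

/-- The `n × n` block of a `gn × gn` matrix in position `(j, i)`. -/
def blk {g n : ℕ} (M : Matrix (Fin g × Fin n) (Fin g × Fin n) ℂ) (j i : Fin g) :
    Matrix (Fin n) (Fin n) ℂ :=
  fun a b => M (j, a) (i, b)

/-- The convexotonic map `p(X) = X (I - Λ_Ξ(X))⁻¹`, given blockwise by
`p(X)ᵢ = Σⱼ Xⱼ [(I - Λ_Ξ(X))⁻¹]_{j,i}`. -/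
def pmap {g n : ℕ} (Ξ : Fin g → Matrix (Fin g) (Fin g) ℂ)
    (X : Fin g → Matrix (Fin n) (Fin n) ℂ) : Fin g → Matrix (Fin n) (Fin n) ℂ :=
  fun i => ∑ j, X j * blk ((1 - lamK Ξ X)⁻¹) j i

/-- The convexotonic map `q(X) = X (I + Λ_Ξ(X))⁻¹`, given blockwise by
`q(X)ᵢ = Σⱼ Xⱼ [(I + Λ_Ξ(X))⁻¹]_{j,i}`. -/
def qmap {g n : ℕ} (Ξ : Fin g → Matrix (Fin g) (Fin g) ℂ)
    (X : Fin g → Matrix (Fin n) (Fin n) ℂ) : Fin g → Matrix (Fin n) (Fin n) ℂ :=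
  fun i => ∑ j, X j * blk ((1 + lamK Ξ X)⁻¹) j i

/-- A tuple `Ξ` of `g × g` matrices is convexotonic if
`Ξ_k Ξ_j = Σ_s (Ξ_j)_{k,s} Ξ_s` for all `j, k`. -/
def Convexotonic {g : ℕ} (Ξ : Fin g → Matrix (Fin g) (Fin g) ℂ) : Prop :=
  ∀ j k, Ξ k * Ξ j = ∑ s, (Ξ j) k s • Ξ s

/-- `Λ_A(α) = Σⱼ αⱼ Aⱼ` for a scalar point `α ∈ ℂ^g`. -/
def lamScalar {g d : ℕ} (A : Fin g → Matrix (Fin d) (Fin d) ℂ) (α : Fin g → ℂ) :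
    Matrix (Fin d) (Fin d) ℂ :=
  ∑ j, α j • A j

/-- A hyperbasis of `ℂ^d`: `d+1` vectors, each `d` of which form a basis. -/
def Hyperbasis {d : ℕ} (u : Fin (d + 1) → (Fin d → ℂ)) : Prop :=
  ∀ i : Fin (d + 1),
    LinearIndependent ℂ (fun j : {j : Fin (d + 1) // j ≠ i} => u j) ∧
    Submodule.span ℂ (Set.range fun j : {j : Fin (d + 1) // j ≠ i} => u j) = ⊤

/-- The tuple `A ∈ M_d(ℂ)^g` is sv-generic. -/
def SvGeneric {g d : ℕ} (A : Fin g → Matrix (Fin d) (Fin d) ℂ) : Prop :=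
  (∃ (α : Fin (d + 1) → (Fin g → ℂ)) (u : Fin (d + 1) → (Fin d → ℂ)),
    (∀ j, (1 - (lamScalar A (α j))ᴴ * lamScalar A (α j)).PosSemidef ∧
      u j ≠ 0 ∧
      LinearMap.ker (Matrix.mulVecLin (1 - (lamScalar A (α j))ᴴ * lamScalar A (α j)))
        = Submodule.span ℂ {u j}) ∧
    Hyperbasis u) ∧
  (∃ (β : Fin d → (Fin g → ℂ)) (v : Fin d → (Fin d → ℂ)),
    (∀ k, (1 - lamScalar A (β k) * (lamScalar A (β k))ᴴ).PosSemidef ∧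
      v k ≠ 0 ∧
      LinearMap.ker (Matrix.mulVecLin (1 - lamScalar A (β k) * (lamScalar A (β k))ᴴ))
        = Submodule.span ℂ {v k}) ∧
    LinearIndependent ℂ v ∧ Submodule.span ℂ (Set.range v) = ⊤)

/-- Evaluation of a `k × l` matrix of noncommutative polynomials at a tuple of
`n × n` matrices, yielding a `kn × ln` matrix. -/
def polyEval {k l g n : ℕ} (Q : Matrix (Fin k) (Fin l) (FreeAlgebra ℂ (Fin g)))
    (X : Fin g → Matrix (Fin n) (Fin n) ℂ) :
    Matrix (Fin k × Fin n) (Fin l × Fin n) ℂ :=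
  fun a b => (FreeAlgebra.lift ℂ X) (Q a.1 b.1) a.2 b.2

/-! Both ways of bracketing `G_ℓ C G_k C G_j` expand in the linearly independent family `G`:
the coefficients are the rows `ℓ` of `Ψ_k Ψ_j` and of `Σ_s (Ψ_j)_{k,s} Ψ_s`, which therefore
agree. For a tuple `J` spanning an algebra this applies with `C = 1`. -/

section Sandwich

variable {ι m n : Type*} [Fintype ι] [Fintype m] [Fintype n]
  {G : ι → Matrix m n ℂ} {C : Matrix n m ℂ} {Ψ : ι → Matrix ι ι ℂ}

theorem sandwich_assoc_left (hΨ : ∀ ℓ j, G ℓ * C * G j = ∑ s, (Ψ j) ℓ s • G s) (ℓ k j : ι) :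
    G ℓ * C * (G k * C * G j) =
      Fintype.linearCombination ℂ G (fun t => ∑ s, Ψ j k s * Ψ s ℓ t) := by
  rw [hΨ k j, Matrix.mul_sum, Fintype.linearCombination_apply]
  simp only [Matrix.mul_smul, hΨ, Finset.smul_sum, Finset.sum_smul, smul_smul]
  exact Finset.sum_comm

theorem sandwich_assoc_right (hΨ : ∀ ℓ j, G ℓ * C * G j = ∑ s, (Ψ j) ℓ s • G s) (ℓ k j : ι) :
    G ℓ * C * G k * C * G j =
      Fintype.linearCombination ℂ G (fun t => ∑ s, Ψ k ℓ s * Ψ j s t) := by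
  rw [hΨ ℓ k, Matrix.sum_mul, Matrix.sum_mul, Fintype.linearCombination_apply]
  simp only [Matrix.smul_mul, hΨ, Finset.smul_sum, Finset.sum_smul, smul_smul]
  exact Finset.sum_comm

end Sandwich

theorem convexotonic_of_mul_mul_eq_sum {g : ℕ} {m n : Type*} [Fintype m] [Fintype n]
    {G : Fin g → Matrix m n ℂ} {C : Matrix n m ℂ}
    {Ψ : Fin g → Matrix (Fin g) (Fin g) ℂ} (hG : LinearIndependent ℂ G)
    (hΨ : ∀ ℓ j, G ℓ * C * G j = ∑ s, (Ψ j) ℓ s • G s) :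
    Convexotonic Ψ := by
  intro j k
  ext ℓ t
  have hassoc : G ℓ * C * G k * C * G j = G ℓ * C * (G k * C * G j) := by
    simp only [Matrix.mul_assoc]
  have hcoeff := linearIndependent_iff_injective_fintypeLinearCombination.mp hG
    ((sandwich_assoc_right hΨ ℓ k j).symm.trans (hassoc.trans (sandwich_assoc_left hΨ ℓ k j)))
  simpa [Matrix.mul_apply, Matrix.sum_apply] using congrFun hcoeff t

section StructureConstants

variable {ι A : Type*} [Fintype ι] [Mul A] [AddCommMonoid A] [Module ℂ A] {J : ι → A}

theorem exists_structure_constants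
    (hJ : ∀ k j, J k * J j ∈ Submodule.span ℂ (Set.range J)) :
    ∃ Ψ : ι → Matrix ι ι ℂ, ∀ k j, J k * J j = ∑ s, (Ψ j) k s • J s := by
  choose c hc using fun k j => (Submodule.mem_span_range_iff_exists_fun ℂ).mp (hJ k j)
  exact ⟨fun j => Matrix.of fun k => c k j, fun k j => (hc k j).symm⟩

theorem structure_constants_unique (hJ : LinearIndependent ℂ J) {Ψ Ψ' : ι → Matrix ι ι ℂ}
    (hΨ : ∀ k j, J k * J j = ∑ s, (Ψ j) k s • J s)
    (hΨ' : ∀ k j, J k * J j = ∑ s, (Ψ' j) k s • J s) :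
    Ψ = Ψ' := by
  funext j k
  apply linearIndependent_iff_injective_fintypeLinearCombination.mp hJ
  simp only [Fintype.linearCombination_apply, ← hΨ, ← hΨ']

end StructureConstants

/-- if the tuple `G` of `d × e` matrices is linearly independent,
`C` is `e × d`, and `G_ℓ C G_j = Σ_s (Ψ_j)_{ℓ,s} G_s`, then `Ψ` is convexotonic.
In particular, if `J ∈ M_d(ℂ)^g` is linearly independent and its span is closed
under multiplication, the unique tuple `Ψ'` with `J_k J_j = Σ_s (Ψ'_j)_{k,s} J_s`
is convexotonic. -/
theorem convexotonic_from_algebra {g d e : ℕ}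
    (G : Fin g → Matrix (Fin d) (Fin e) ℂ) (C : Matrix (Fin e) (Fin d) ℂ)
    (Ψ : Fin g → Matrix (Fin g) (Fin g) ℂ)
    (hG : LinearIndependent ℂ G)
    (hΨ : ∀ ℓ j, G ℓ * C * G j = ∑ s, (Ψ j) ℓ s • G s) :
    Convexotonic Ψ ∧
    ∀ (J : Fin g → Matrix (Fin d) (Fin d) ℂ), LinearIndependent ℂ J →
      (∀ k j, J k * J j ∈ Submodule.span ℂ (Set.range J)) →
      ∃! Ψ' : Fin g → Matrix (Fin g) (Fin g) ℂ,
        (∀ k j, J k * J j = ∑ s, (Ψ' j) k s • J s) ∧ Convexotonic Ψ' := by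
  refine ⟨convexotonic_of_mul_mul_eq_sum hG hΨ, fun J hJ hclosed => ?_⟩
  obtain ⟨Ψ', hΨ'⟩ := exists_structure_constants hclosed
  have hΨ'₁ : ∀ k j, J k * 1 * J j = ∑ s, (Ψ' j) k s • J s := by
    simpa only [Matrix.mul_one] using hΨ'
  exact ⟨Ψ', ⟨hΨ', convexotonic_of_mul_mul_eq_sum hJ hΨ'₁⟩,
    fun Ψ'' h => structure_constants_unique hJ h.1 hΨ'⟩
end
end

section
/- Let T be a d×d complex matrix. (a) I + T + T^* is positive semidefinite if and only if I + T is invertible and ‖(I+T)^{-1}T‖ ≤ 1. (b) I + T + T^* is positive definite if and only if I + T is invertible and ‖(I+T)^{-1}T‖ < 1. -/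
/-!
With `C = (1 + T)⁻¹ T` one has `C (1 + T) = T`, hence
`1 + T + Tᴴ = (1 + T)ᴴ (1 + T) - Tᴴ T = (1 + T)ᴴ (1 - Cᴴ C) (1 + T)`.
Since `xᴴ (1 - Cᴴ C) x = ‖x‖² - ‖C x‖²`, the matrix `1 - Cᴴ C` is positive semidefinite
(definite) iff `‖C‖ ≤ 1` (`‖C‖ < 1`, the operator norm being attained on the compact unit ball).
Invertibility of `1 + T` is forced: if `(1 + T) x = 0` then `T x = -x`, and the quadratic form
of `1 + T + Tᴴ` at `x` is `-‖x‖²`.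
-/

open scoped Kronecker Matrix Matrix.Norms.L2Operator ComplexOrder

noncomputable section

namespace ContinuousLinearMap

variable {𝕜 E F : Type*} [DenselyNormedField 𝕜] [NormedAddCommGroup E] [NormedSpace 𝕜 E]
  [ProperSpace E] [SeminormedAddCommGroup F] [NormedSpace 𝕜 F]

theorem exists_norm_le_one_norm_apply_eq_opNorm (f : E →L[𝕜] F) :
    ∃ x, ‖x‖ ≤ 1 ∧ ‖f x‖ = ‖f‖ := by
  have hcompact : IsCompact ((fun x => ‖f x‖) '' Metric.closedBall 0 1) :=
    (isCompact_closedBall 0 1).image (by fun_prop)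
  obtain ⟨x, hx, hfx⟩ := f.sSup_unitClosedBall_eq_norm ▸
    hcompact.sSup_mem ((Metric.nonempty_closedBall.mpr zero_le_one).image _)
  exact ⟨x, mem_closedBall_zero_iff.mp hx, hfx⟩

theorem opNorm_lt_iff (f : E →L[𝕜] F) {C : ℝ} (hC : 0 < C) :
    ‖f‖ < C ↔ ∀ x ≠ 0, ‖f x‖ < C * ‖x‖ := by
  refine ⟨fun hf x hx => ?_, fun hf => ?_⟩
  · calc ‖f x‖ ≤ ‖f‖ * ‖x‖ := f.le_opNorm x
      _ < C * ‖x‖ := by gcongr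
  · obtain ⟨x, hx1, hfx⟩ := f.exists_norm_le_one_norm_apply_eq_opNorm
    rcases eq_or_ne x 0 with rfl | hx0
    · simpa [← hfx] using hC
    · calc ‖f‖ = ‖f x‖ := hfx.symm
        _ < C * ‖x‖ := hf x hx0
        _ ≤ C := mul_le_of_le_one_right hC.le hx1

end ContinuousLinearMap

namespace Matrix

open WithLp

variable {𝕜 m n : Type*} [RCLike 𝕜] [Fintype m] [Fintype n]

theorem star_dotProduct_self_eq_norm_sq (x : n → 𝕜) :
    star x ⬝ᵥ x = ((‖toLp 2 x‖ ^ 2 : ℝ) : 𝕜) := by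
  rw [dotProduct_comm, ← EuclideanSpace.inner_toLp_toLp, inner_self_eq_norm_sq_to_K,
    RCLike.ofReal_pow]

theorem star_dotProduct_conjTranspose_mul_self_mulVec (A : Matrix m n 𝕜) (x : n → 𝕜) :
    star x ⬝ᵥ (Aᴴ * A) *ᵥ x = ((‖toLp 2 (A *ᵥ x)‖ ^ 2 : ℝ) : 𝕜) := by
  rw [← mulVec_mulVec, dotProduct_mulVec, vecMul_conjTranspose, star_star,
    star_dotProduct_self_eq_norm_sq]

variable [DecidableEq n]

theorem star_dotProduct_one_sub_conjTranspose_mul_self_mulVec (A : Matrix m n 𝕜) (x : n → 𝕜) :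
    star x ⬝ᵥ (1 - Aᴴ * A) *ᵥ x = ((‖toLp 2 x‖ ^ 2 - ‖toLp 2 (A *ᵥ x)‖ ^ 2 : ℝ) : 𝕜) := by
  rw [sub_mulVec, dotProduct_sub, one_mulVec, star_dotProduct_self_eq_norm_sq,
    star_dotProduct_conjTranspose_mul_self_mulVec, RCLike.ofReal_sub]

theorem l2_opNorm_le_one_iff (A : Matrix m n 𝕜) :
    ‖A‖ ≤ 1 ↔ ∀ x, ‖toLp 2 (A *ᵥ x)‖ ≤ ‖toLp 2 x‖ := by
  rw [l2_opNorm_def, ContinuousLinearMap.opNorm_le_iff zero_le_one,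
    ← (WithLp.equiv 2 (n → 𝕜)).symm.forall_congr_right]
  simp only [equiv_symm_apply, LinearEquiv.trans_apply, LinearMap.coe_toContinuousLinearMap',
    toLpLin_toLp, toLin'_apply, one_mul]

theorem l2_opNorm_lt_one_iff (A : Matrix m n 𝕜) :
    ‖A‖ < 1 ↔ ∀ x ≠ 0, ‖toLp 2 (A *ᵥ x)‖ < ‖toLp 2 x‖ := by
  rw [l2_opNorm_def, ContinuousLinearMap.opNorm_lt_iff _ zero_lt_one,
    ← (WithLp.equiv 2 (n → 𝕜)).symm.forall_congr_right]
  simp only [equiv_symm_apply, ne_eq, toLp_eq_zero, LinearEquiv.trans_apply,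
    LinearMap.coe_toContinuousLinearMap', toLpLin_toLp, toLin'_apply, one_mul]

theorem l2_opNorm_le_one_iff_posSemidef (A : Matrix m n 𝕜) :
    ‖A‖ ≤ 1 ↔ (1 - Aᴴ * A).PosSemidef := by
  simp only [l2_opNorm_le_one_iff, posSemidef_iff_dotProduct_mulVec,
    isHermitian_one.sub (isHermitian_conjTranspose_mul_self A), true_and,
    star_dotProduct_one_sub_conjTranspose_mul_self_mulVec, RCLike.ofReal_nonneg, sub_nonneg,
    sq_le_sq₀ (norm_nonneg _) (norm_nonneg _)]

theorem l2_opNorm_lt_one_iff_posDef (A : Matrix m n 𝕜) :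
    ‖A‖ < 1 ↔ (1 - Aᴴ * A).PosDef := by
  simp only [l2_opNorm_lt_one_iff, posDef_iff_dotProduct_mulVec,
    isHermitian_one.sub (isHermitian_conjTranspose_mul_self A), true_and,
    star_dotProduct_one_sub_conjTranspose_mul_self_mulVec, RCLike.ofReal_pos, sub_pos,
    sq_lt_sq₀ (norm_nonneg _) (norm_nonneg _)]

variable (T : Matrix n n 𝕜)

theorem one_add_add_conjTranspose_eq (hT : IsUnit (1 + T)) :
    1 + T + Tᴴ = star (1 + T) * (1 - ((1 + T)⁻¹ * T)ᴴ * ((1 + T)⁻¹ * T)) * (1 + T) := by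
  set C := (1 + T)⁻¹ * T
  have hC : C * (1 + T) = T := by
    rw [Matrix.mul_assoc, ((Commute.one_left T).add_left (Commute.refl T)).symm.eq,
      ← Matrix.mul_assoc, nonsing_inv_mul _ ((isUnit_iff_isUnit_det _).mp hT), Matrix.one_mul]
  calc 1 + T + Tᴴ = (1 + T)ᴴ * (1 + T) - Tᴴ * T := by
        rw [conjTranspose_add, conjTranspose_one]
        noncomm_ring
    _ = (1 + T)ᴴ * (1 + T) - (C * (1 + T))ᴴ * (C * (1 + T)) := by rw [hC]
    _ = star (1 + T) * (1 - Cᴴ * C) * (1 + T) := by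
        rw [conjTranspose_mul, star_eq_conjTranspose]
        noncomm_ring

theorem isUnit_one_add_of_posSemidef (h : (1 + T + Tᴴ).PosSemidef) : IsUnit (1 + T) := by
  rw [isUnit_iff_isUnit_det, isUnit_iff_ne_zero, Ne, ← exists_mulVec_eq_zero_iff]
  rintro ⟨v, hv, hTv⟩
  have hTv' : T *ᵥ v = -v := by
    rw [add_mulVec, one_mulVec] at hTv
    exact eq_neg_of_add_eq_zero_right hTv
  have hform : star v ⬝ᵥ (1 + T + Tᴴ) *ᵥ v = -(star v ⬝ᵥ v) := by
    rw [add_mulVec, hTv, zero_add, dotProduct_mulVec, ← star_mulVec, hTv', star_neg,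
      neg_dotProduct]
  have hnonpos := h.dotProduct_mulVec_nonneg v
  rw [hform, neg_nonneg] at hnonpos
  exact hv (dotProduct_star_self_eq_zero.mp (hnonpos.antisymm (dotProduct_star_self_nonneg v)))

theorem posSemidef_one_add_add_conjTranspose_iff (hT : IsUnit (1 + T)) :
    (1 + T + Tᴴ).PosSemidef ↔ ‖(1 + T)⁻¹ * T‖ ≤ 1 := by
  rw [one_add_add_conjTranspose_eq T hT, IsUnit.posSemidef_star_left_conjugate_iff hT,
    l2_opNorm_le_one_iff_posSemidef]

theorem posDef_one_add_add_conjTranspose_iff (hT : IsUnit (1 + T)) :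
    (1 + T + Tᴴ).PosDef ↔ ‖(1 + T)⁻¹ * T‖ < 1 := by
  rw [one_add_add_conjTranspose_eq T hT, IsUnit.posDef_star_left_conjugate_iff hT,
    l2_opNorm_lt_one_iff_posDef]

end Matrix

/-- `I + T + T^*` is positive semidefinite iff `I + T` is invertible
and `‖(I+T)⁻¹ T‖ ≤ 1`; and `I + T + T^*` is positive definite iff `I + T` is
invertible and `‖(I+T)⁻¹ T‖ < 1`. -/
theorem psd_iff_contraction {d : ℕ} (T : Matrix (Fin d) (Fin d) ℂ) :
    ((1 + T + Tᴴ).PosSemidef ↔ IsUnit (1 + T) ∧ ‖(1 + T)⁻¹ * T‖ ≤ 1) ∧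
    ((1 + T + Tᴴ).PosDef ↔ IsUnit (1 + T) ∧ ‖(1 + T)⁻¹ * T‖ < 1) := by
  constructor
  · refine ⟨fun h => ?_, fun ⟨hT, hC⟩ => (T.posSemidef_one_add_add_conjTranspose_iff hT).mpr hC⟩
    have hT := T.isUnit_one_add_of_posSemidef h
    exact ⟨hT, (T.posSemidef_one_add_add_conjTranspose_iff hT).mp h⟩
  · refine ⟨fun h => ?_, fun ⟨hT, hC⟩ => (T.posDef_one_add_add_conjTranspose_iff hT).mpr hC⟩
    have hT := T.isUnit_one_add_of_posSemidef h.posSemidef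
    exact ⟨hT, (T.posDef_one_add_add_conjTranspose_iff hT).mp h⟩
end
end

section
/- Let J = (J_1,…,J_g) ∈ M_d(ℂ)^g and Ξ = (Ξ_1,…,Ξ_g) ∈ M_g(ℂ)^g satisfy J_k J_j = Σ_{s=1}^g (Ξ_j)_{k,s} J_s for all 1 ≤ j,k ≤ g. Fix n and X ∈ M_n(ℂ)^g. (i) If I + Λ_Ξ(X) is invertible and q(X) ∈ M_n(ℂ)^g is defined by q(X)_i = Σ_{j=1}^g X_j [(I+Λ_Ξ(X))^{-1}]_{j,i}, then Λ_J(q(X)) · (I + Λ_J(X)) = Λ_J(X). (ii) If I − Λ_Ξ(X) is invertible and p(X) ∈ M_n(ℂ)^g is defined by p(X)_i = Σ_{j=1}^g X_j [(I−Λ_Ξ(X))^{-1}]_{j,i}, then Λ_J(p(X)) · (I − Λ_J(X)) = Λ_J(X). -/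
open scoped Kronecker Matrix Matrix.Norms.L2Operator ComplexOrder

noncomputable section

/-!
Read a tuple `Y` as the block row `[Y₁ ⋯ Y_g]`, so that `q(X) = X (I + Λ_Ξ(X))⁻¹` is a block row
product. The hypothesis on `J` makes `Λ_J` multiplicative in the sense
`Λ_J(Y) Λ_J(X) = Λ_J(Y Λ_Ξ(X))`, hence
`Λ_J(q(X)) (I + Λ_J(X)) = Λ_J(q(X) (I + Λ_Ξ(X))) = Λ_J(X)`.
Part (ii) is part (i) at `-X`, since `p(X) = -q(-X)`.
-/

open Matrix Finset

namespace ConvexotonicIntertwining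

lemma sum_kronecker {ι l m p q α : Type*} [NonUnitalNonAssocSemiring α] (s : Finset ι)
    (A : ι → Matrix l m α) (B : Matrix p q α) :
    (∑ i ∈ s, A i) ⊗ₖ B = ∑ i ∈ s, A i ⊗ₖ B := by
  ext
  simp [Matrix.sum_apply, sum_mul]

lemma kronecker_sum {ι l m p q α : Type*} [NonUnitalNonAssocSemiring α] (s : Finset ι)
    (A : Matrix l m α) (B : ι → Matrix p q α) :
    A ⊗ₖ (∑ i ∈ s, B i) = ∑ i ∈ s, A ⊗ₖ B i := by
  ext
  simp [Matrix.sum_apply, mul_sum]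

variable {g d n : ℕ}

/-- The block row product `[Y₁ ⋯ Y_g] M` of a tuple with a `gn × gn` matrix. -/
def blockRowMul (Y : Fin g → Matrix (Fin n) (Fin n) ℂ)
    (M : Matrix (Fin g × Fin n) (Fin g × Fin n) ℂ) : Fin g → Matrix (Fin n) (Fin n) ℂ :=
  fun i => ∑ j, Y j * blk M j i

lemma qmap_eq_blockRowMul (Ξ : Fin g → Matrix (Fin g) (Fin g) ℂ)
    (X : Fin g → Matrix (Fin n) (Fin n) ℂ) :
    qmap Ξ X = blockRowMul X (1 + lamK Ξ X)⁻¹ := rfl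

lemma blk_mul (M N : Matrix (Fin g × Fin n) (Fin g × Fin n) ℂ) (j i : Fin g) :
    blk (M * N) j i = ∑ k, blk M j k * blk N k i := by
  ext a b
  simp [blk, mul_apply, Fintype.sum_prod_type, Matrix.sum_apply]

lemma blk_one (j i : Fin g) :
    blk (1 : Matrix (Fin g × Fin n) (Fin g × Fin n) ℂ) j i = if j = i then 1 else 0 := by
  ext a b
  by_cases h : j = i <;> simp [blk, one_apply, Prod.ext_iff, h]

lemma blk_lamK (Ξ : Fin g → Matrix (Fin g) (Fin g) ℂ)
    (X : Fin g → Matrix (Fin n) (Fin n) ℂ) (k s : Fin g) :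
    blk (lamK Ξ X) k s = ∑ j, Ξ j k s • X j := by
  ext a b
  simp [blk, lamK, Matrix.sum_apply]

lemma blockRowMul_one (Y : Fin g → Matrix (Fin n) (Fin n) ℂ) : blockRowMul Y 1 = Y := by
  funext i
  simp [blockRowMul, blk_one]

lemma blockRowMul_add (Y : Fin g → Matrix (Fin n) (Fin n) ℂ)
    (M N : Matrix (Fin g × Fin n) (Fin g × Fin n) ℂ) :
    blockRowMul Y (M + N) = blockRowMul Y M + blockRowMul Y N := by
  funext i
  simp only [blockRowMul, Pi.add_apply, ← sum_add_distrib, ← mul_add]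
  rfl

lemma blockRowMul_mul (Y : Fin g → Matrix (Fin n) (Fin n) ℂ)
    (M N : Matrix (Fin g × Fin n) (Fin g × Fin n) ℂ) :
    blockRowMul Y (M * N) = blockRowMul (blockRowMul Y M) N := by
  funext i
  simp only [blockRowMul, blk_mul, mul_sum, sum_mul, mul_assoc]
  exact sum_comm

lemma lamK_add (A : Fin g → Matrix (Fin d) (Fin d) ℂ) (Y Z : Fin g → Matrix (Fin n) (Fin n) ℂ) :
    lamK A (Y + Z) = lamK A Y + lamK A Z := by
  simp only [lamK, Pi.add_apply, kronecker_add, sum_add_distrib]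

lemma lamK_neg (A : Fin g → Matrix (Fin d) (Fin d) ℂ) (Y : Fin g → Matrix (Fin n) (Fin n) ℂ) :
    lamK A (-Y) = -lamK A Y := by
  ext
  simp [lamK, Matrix.sum_apply]

lemma pmap_eq_neg_qmap_neg (Ξ : Fin g → Matrix (Fin g) (Fin g) ℂ)
    (X : Fin g → Matrix (Fin n) (Fin n) ℂ) : pmap Ξ X = -qmap Ξ (-X) := by
  funext i
  simp [pmap, qmap, lamK_neg, ← sub_eq_add_neg]

lemma lamK_mul_lamK {J : Fin g → Matrix (Fin d) (Fin d) ℂ}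
    {Ξ : Fin g → Matrix (Fin g) (Fin g) ℂ} (hΞ : ∀ k j, J k * J j = ∑ s, Ξ j k s • J s)
    (Y X : Fin g → Matrix (Fin n) (Fin n) ℂ) :
    lamK J Y * lamK J X = lamK J (blockRowMul Y (lamK Ξ X)) := by
  calc lamK J Y * lamK J X
      = ∑ k, ∑ j, ∑ s, Ξ j k s • (J s ⊗ₖ (Y k * X j)) := by
        simp only [lamK, sum_mul_sum, ← mul_kronecker_mul, hΞ, sum_kronecker, smul_kronecker]
    _ = ∑ s, ∑ k, ∑ j, Ξ j k s • (J s ⊗ₖ (Y k * X j)) :=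
        (sum_congr rfl fun _ _ => sum_comm).trans sum_comm
    _ = lamK J (blockRowMul Y (lamK Ξ X)) := by
        rw [lamK]
        unfold blockRowMul
        simp only [blk_lamK, mul_sum, mul_smul_comm, kronecker_sum, kronecker_smul]

lemma lamK_qmap_mul {J : Fin g → Matrix (Fin d) (Fin d) ℂ}
    {Ξ : Fin g → Matrix (Fin g) (Fin g) ℂ} (hΞ : ∀ k j, J k * J j = ∑ s, Ξ j k s • J s)
    {X : Fin g → Matrix (Fin n) (Fin n) ℂ} (h : IsUnit (1 + lamK Ξ X)) :
    lamK J (qmap Ξ X) * (1 + lamK J X) = lamK J X := by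
  have hinv : (1 + lamK Ξ X)⁻¹ * (1 + lamK Ξ X) = 1 :=
    nonsing_inv_mul _ ((isUnit_iff_isUnit_det _).mp h)
  have hq : qmap Ξ X + blockRowMul (qmap Ξ X) (lamK Ξ X) = X := by
    calc qmap Ξ X + blockRowMul (qmap Ξ X) (lamK Ξ X)
        = blockRowMul (qmap Ξ X) (1 + lamK Ξ X) := by rw [blockRowMul_add, blockRowMul_one]
      _ = blockRowMul X ((1 + lamK Ξ X)⁻¹ * (1 + lamK Ξ X)) := by
        rw [qmap_eq_blockRowMul, blockRowMul_mul]
      _ = X := by rw [hinv, blockRowMul_one]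
  rw [mul_add, mul_one, lamK_mul_lamK hΞ, ← lamK_add, hq]

end ConvexotonicIntertwining

open ConvexotonicIntertwining in
/-- if `J_k J_j = Σ_s (Ξ_j)_{k,s} J_s`, then (i) when `I + Λ_Ξ(X)`
is invertible, `Λ_J(q(X)) (I + Λ_J(X)) = Λ_J(X)`, and (ii) when `I - Λ_Ξ(X)` is
invertible, `Λ_J(p(X)) (I - Λ_J(X)) = Λ_J(X)`. -/
theorem convexotonic_intertwining {g d n : ℕ}
    (J : Fin g → Matrix (Fin d) (Fin d) ℂ)
    (Ξ : Fin g → Matrix (Fin g) (Fin g) ℂ)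
    (hΞ : ∀ k j, J k * J j = ∑ s, (Ξ j) k s • J s)
    (X : Fin g → Matrix (Fin n) (Fin n) ℂ) :
    (IsUnit (1 + lamK Ξ X) →
      lamK J (qmap Ξ X) * (1 + lamK J X) = lamK J X) ∧
    (IsUnit (1 - lamK Ξ X) →
      lamK J (pmap Ξ X) * (1 - lamK J X) = lamK J X) := by
  refine ⟨lamK_qmap_mul hΞ, fun h => ?_⟩
  have hq := lamK_qmap_mul (J := J) hΞ (X := -X) (by rwa [lamK_neg, ← sub_eq_add_neg])
  rw [lamK_neg, ← sub_eq_add_neg] at hq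
  rw [pmap_eq_neg_qmap_neg, lamK_neg, neg_mul, hq, neg_neg]
end
end

section
/- Let J = (J_1,…,J_g) ∈ M_d(ℂ)^g be linearly independent and suppose the span of J_1,…,J_g is closed under multiplication, with Ξ ∈ M_g(ℂ)^g the unique tuple satisfying J_k J_j = Σ_{s=1}^g (Ξ_j)_{k,s} J_s. Then for every n and every X ∈ M_n(ℂ)^g with L_J(X) positive semidefinite, the matrix I + Λ_Ξ(X) is invertible; hence the convexotonic map q(X) = X(I+Λ_Ξ(X))^{-1} is defined at every point of the free spectrahedron D_J. -/
/-!
Write `R_c` for the `g × d` matrix whose `k`-th row is the `c`-th row of `J_k`. The relation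
`J_k J_j = Σ_s (Ξ_j)_{k,s} J_s`, read on `c`-th rows, says `Ξ_j R_c = R_c J_j`, hence
`Λ_Ξ(X) (R_c ⊗ I) = (R_c ⊗ I) Λ_J(X)`. A nonzero row vector `v` with `v (I + Λ_Ξ(X)) = 0` thus
yields row vectors `u = v (R_c ⊗ I)` with `u Λ_J(X) = -u`, and by linear independence of `J` one
of them is nonzero. But then `u L_J(X) u* = -‖u‖² < 0`, so `L_J(X)` is not positive semidefinite.
-/

open scoped Kronecker Matrix Matrix.Norms.L2Operator ComplexOrder

noncomputable section

namespace Matrix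

theorem eq_zero_of_vecMul_eq_neg_of_posSemidef {ι : Type*} [Fintype ι] [DecidableEq ι]
    {M : Matrix ι ι ℂ} {u : ι → ℂ} (hM : (1 + M + Mᴴ).PosSemidef) (hu : u ᵥ* M = -u) :
    u = 0 := by
  have hMHu : Mᴴ *ᵥ star u = -star u := by rw [← star_vecMul, hu, star_neg]
  have hMu : u ⬝ᵥ (M *ᵥ star u) = -(star u ⬝ᵥ u) := by
    rw [dotProduct_mulVec, hu, neg_dotProduct, dotProduct_comm]
  have hquad : star (star u) ⬝ᵥ ((1 + M + Mᴴ) *ᵥ star u) = -(star u ⬝ᵥ u) := by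
    rw [star_star, add_mulVec, add_mulVec, one_mulVec, dotProduct_add, dotProduct_add, hMu, hMHu,
      dotProduct_neg, dotProduct_comm u]
    ring
  have hnonpos := hM.dotProduct_mulVec_nonneg (star u)
  rw [hquad, neg_nonneg] at hnonpos
  exact dotProduct_star_self_eq_zero.1 (le_antisymm hnonpos (dotProduct_star_self_nonneg u))

end Matrix

theorem lamK_mul_kronecker_one {g d d' n : ℕ} {A : Fin g → Matrix (Fin d) (Fin d) ℂ}
    {A' : Fin g → Matrix (Fin d') (Fin d') ℂ} {B : Matrix (Fin d) (Fin d') ℂ}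
    (hB : ∀ j, A j * B = B * A' j) (X : Fin g → Matrix (Fin n) (Fin n) ℂ) :
    lamK A X * (B ⊗ₖ (1 : Matrix (Fin n) (Fin n) ℂ)) =
      (B ⊗ₖ (1 : Matrix (Fin n) (Fin n) ℂ)) * lamK A' X := by
  simp only [lamK, Matrix.sum_mul, Matrix.mul_sum, ← Matrix.mul_kronecker_mul, hB, one_mul,
    mul_one]

def rowMatrix {g d : ℕ} (J : Fin g → Matrix (Fin d) (Fin d) ℂ) (c : Fin d) :
    Matrix (Fin g) (Fin d) ℂ :=
  Matrix.of fun k b => J k c b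

theorem mul_rowMatrix {g d : ℕ} {J : Fin g → Matrix (Fin d) (Fin d) ℂ}
    {Ξ : Fin g → Matrix (Fin g) (Fin g) ℂ} (hΞ : ∀ k j, J k * J j = ∑ s, (Ξ j) k s • J s)
    (c : Fin d) (j : Fin g) : Ξ j * rowMatrix J c = rowMatrix J c * J j := by
  ext k a
  have h := congrFun (congrFun (hΞ k j) c) a
  simp only [Matrix.mul_apply, Matrix.sum_apply, Matrix.smul_apply, smul_eq_mul] at h
  simp only [rowMatrix, Matrix.mul_apply, Matrix.of_apply, h]

theorem exists_vecMul_rowMatrix_kronecker_ne_zero {g d n : ℕ}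
    {J : Fin g → Matrix (Fin d) (Fin d) ℂ} (hJ : LinearIndependent ℂ J)
    {v : Fin g × Fin n → ℂ} (hv : v ≠ 0) :
    ∃ c, v ᵥ* (rowMatrix J c ⊗ₖ (1 : Matrix (Fin n) (Fin n) ℂ)) ≠ 0 := by
  by_contra! h
  apply hv
  ext ⟨k, i⟩
  refine Fintype.linearIndependent_iff.1 hJ (fun s => v (s, i)) ?_ k
  ext c a
  have := congrFun (h c) (a, i)
  simpa [Matrix.vecMul, dotProduct, Fintype.sum_prod_type, Matrix.one_apply, rowMatrix,
    Matrix.sum_apply, mul_comm] using this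

theorem qmap_defined_on_spectrahedron_general {g d : ℕ}
    (J : Fin g → Matrix (Fin d) (Fin d) ℂ)
    (Ξ : Fin g → Matrix (Fin g) (Fin g) ℂ)
    (hli : LinearIndependent ℂ J)
    (hΞ : ∀ k j, J k * J j = ∑ s, (Ξ j) k s • J s) :
    ∀ (n : ℕ) (X : Fin g → Matrix (Fin n) (Fin n) ℂ),
      (Lpen J X).PosSemidef → IsUnit (1 + lamK Ξ X) := by
  intro n X hL
  rw [Matrix.isUnit_iff_isUnit_det, isUnit_iff_ne_zero]
  intro hdet
  obtain ⟨v, hv0, hv⟩ := Matrix.exists_vecMul_eq_zero_iff.2 hdet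
  have hvΞ : v ᵥ* lamK Ξ X = -v := by
    rw [Matrix.vecMul_add, Matrix.vecMul_one] at hv
    exact eq_neg_of_add_eq_zero_right hv
  obtain ⟨c, hc⟩ := exists_vecMul_rowMatrix_kronecker_ne_zero hli hv0
  refine hc (Matrix.eq_zero_of_vecMul_eq_neg_of_posSemidef hL ?_)
  rw [Matrix.vecMul_vecMul, ← lamK_mul_kronecker_one (mul_rowMatrix hΞ c), ← Matrix.vecMul_vecMul,
    hvΞ, Matrix.neg_vecMul]

/-- if `J` is linearly independent with span closed under
multiplication and `J_k J_j = Σ_s (Ξ_j)_{k,s} J_s`, then `I + Λ_Ξ(X)` is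
invertible at every point of the free spectrahedron `D_J`. -/
theorem qmap_defined_on_spectrahedron {g d : ℕ}
    (J : Fin g → Matrix (Fin d) (Fin d) ℂ)
    (Ξ : Fin g → Matrix (Fin g) (Fin g) ℂ)
    (hli : LinearIndependent ℂ J)
    (hmul : ∀ k j, J k * J j ∈ Submodule.span ℂ (Set.range J))
    (hΞ : ∀ k j, J k * J j = ∑ s, (Ξ j) k s • J s) :
    ∀ (n : ℕ) (X : Fin g → Matrix (Fin n) (Fin n) ℂ),
      (Lpen J X).PosSemidef → IsUnit (1 + lamK Ξ X) :=
  qmap_defined_on_spectrahedron_general J Ξ hli hΞ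
end
end

section
/- Let J = (J_1,…,J_g) ∈ M_d(ℂ)^g be linearly independent with the span of J_1,…,J_g closed under multiplication, and let Ξ ∈ M_g(ℂ)^g be the unique tuple with J_k J_j = Σ_{s=1}^g (Ξ_j)_{k,s} J_s. Fix n. (i) If Y ∈ M_n(ℂ)^g and L_J(Y) is positive definite, then I + Λ_Ξ(Y) is invertible, ‖Λ_J(q(Y))‖ < 1 where q(Y) = Y(I+Λ_Ξ(Y))^{-1}, moreover I − Λ_Ξ(q(Y)) is invertible and p(q(Y)) = Y where p(X) = X(I−Λ_Ξ(X))^{-1}. (ii) If X ∈ M_n(ℂ)^g and ‖Λ_J(X)‖ < 1, then I − Λ_Ξ(X) is invertible, L_J(p(X)) is positive definite, I + Λ_Ξ(p(X)) is invertible, and q(p(X)) = X. Consequently q is a bijection from the interior {Y : L_J(Y) ≻ 0} of D_J(n) onto the interior {X : ‖Λ_J(X)‖ < 1} of B_J(n), with inverse p. -/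
open scoped Kronecker Matrix Matrix.Norms.L2Operator ComplexOrder

noncomputable section

/-
Write `Λ := Λ_J(X)`. Because `Ξ` holds the structure constants of the algebra spanned by `J`,
`Λ_J` is multiplicative for the row action of `gn × gn` matrices on tuples:
`Λ_J(X · Λ_Ξ(Y)) = Λ_J(X) Λ_J(Y)`. Hence `Λ_J(q(X)) = Λ (1 + Λ)⁻¹` and `Λ_J(p(X)) = Λ (1 - Λ)⁻¹`,
and since `Λ_J` is injective, `p` and `q` are conjugate to these mutually inverse Möbius maps;
the same intertwining makes `1 ± Λ_Ξ(X)` invertible whenever `1 ± Λ_J(X)` is.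
In the C⋆-algebra `M_{dn}(ℂ)` the identity `1 - C⋆C = K⋆ (1 + Λ + Λ⋆) K` for `K = (1 + Λ)⁻¹`,
`C = ΛK` exchanges the two positivity conditions `L_J ≻ 0` and `‖Λ_J‖ < 1`.
-/

open scoped MatrixOrder Pointwise Ring

section RingInverse

variable {R : Type*} [Ring R]

lemma one_sub_mul_ringInverse_one_add {a : R} (h : IsUnit (1 + a)) :
    1 - a * (1 + a)⁻¹ʳ = (1 + a)⁻¹ʳ :=
  calc 1 - a * (1 + a)⁻¹ʳ = (1 + a) * (1 + a)⁻¹ʳ - a * (1 + a)⁻¹ʳ := by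
        rw [Ring.mul_inverse_cancel _ h]
    _ = (1 + a)⁻¹ʳ := by noncomm_ring

lemma one_add_mul_ringInverse_one_sub {a : R} (h : IsUnit (1 - a)) :
    1 + a * (1 - a)⁻¹ʳ = (1 - a)⁻¹ʳ :=
  calc 1 + a * (1 - a)⁻¹ʳ = (1 - a) * (1 - a)⁻¹ʳ + a * (1 - a)⁻¹ʳ := by
        rw [Ring.mul_inverse_cancel _ h]
    _ = (1 - a)⁻¹ʳ := by noncomm_ring

lemma mul_ringInverse_one_sub_mul_ringInverse_one_add {a : R} (h : IsUnit (1 + a)) :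
    a * (1 + a)⁻¹ʳ * (1 - a * (1 + a)⁻¹ʳ)⁻¹ʳ = a := by
  rw [one_sub_mul_ringInverse_one_add h, Ring.inverse_inverse h, mul_assoc,
    Ring.inverse_mul_cancel _ h, mul_one]

lemma mul_ringInverse_one_add_mul_ringInverse_one_sub {a : R} (h : IsUnit (1 - a)) :
    a * (1 - a)⁻¹ʳ * (1 + a * (1 - a)⁻¹ʳ)⁻¹ʳ = a := by
  rw [one_add_mul_ringInverse_one_sub h, Ring.inverse_inverse h, mul_assoc,
    Ring.inverse_mul_cancel _ h, mul_one]

lemma one_sub_star_mul_self_of_mul_ringInverse_one_add [StarRing R] {a : R} (h : IsUnit (1 + a)) :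
    1 - star (a * (1 + a)⁻¹ʳ) * (a * (1 + a)⁻¹ʳ)
      = star (1 + a)⁻¹ʳ * (1 + a + star a) * (1 + a)⁻¹ʳ := by
  set k := (1 + a)⁻¹ʳ
  calc 1 - star (a * k) * (a * k)
      = star ((1 + a) * k) * ((1 + a) * k) - star (a * k) * (a * k) := by
        rw [Ring.mul_inverse_cancel _ h, star_one, one_mul]
    _ = star k * (1 + a + star a) * k := by
        simp only [star_mul, star_add, star_one]
        noncomm_ring

lemma one_add_add_star_of_mul_ringInverse_one_sub [StarRing R] {a : R} (h : IsUnit (1 - a)) :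
    1 + a * (1 - a)⁻¹ʳ + star (a * (1 - a)⁻¹ʳ)
      = star (1 - a)⁻¹ʳ * (1 - star a * a) * (1 - a)⁻¹ʳ := by
  set k := (1 - a)⁻¹ʳ
  calc 1 + a * k + star (a * k)
      = star ((1 - a) * k) * ((1 - a) * k) + star ((1 - a) * k) * (a * k)
          + star (a * k) * ((1 - a) * k) := by
        rw [Ring.mul_inverse_cancel _ h, star_one, one_mul, one_mul, mul_one]
    _ = star k * (1 - star a * a) * k := by
        simp only [star_mul, star_sub, star_one]
        noncomm_ring

end RingInverse

section CStarAlgebra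

variable {A : Type*} [CStarAlgebra A] [PartialOrder A] [StarOrderedRing A]

lemma isStrictlyPositive_one_sub_iff_norm_lt_one {b : A} (hb : 0 ≤ b) :
    IsStrictlyPositive (1 - b) ↔ ‖b‖ < 1 := by
  nontriviality A
  constructor
  · intro h
    have hmem : 1 - ‖b‖ ∈ spectrum ℝ (1 - b) := by
      rw [← map_one (algebraMap ℝ A), ← spectrum.singleton_sub_eq]
      exact Set.sub_mem_sub rfl (CStarAlgebra.norm_mem_spectrum_of_nonneg hb)
    linarith [h.spectrum_pos hmem]
  · intro h
    have hle : b ≤ algebraMap ℝ A ‖b‖ :=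
      (CStarAlgebra.norm_le_iff_le_algebraMap b (norm_nonneg b)).1 le_rfl
    refine (isStrictlyPositive_algebraMap (sub_pos.2 h)).of_le ?_
    rw [map_sub, map_one]
    exact sub_le_sub_left hle 1

lemma isStrictlyPositive_one_sub_star_mul_self_iff (a : A) :
    IsStrictlyPositive (1 - star a * a) ↔ ‖a‖ < 1 := by
  rw [isStrictlyPositive_one_sub_iff_norm_lt_one (star_mul_self_nonneg a),
    CStarRing.norm_star_mul_self, ← sq, sq_lt_one_iff₀ (norm_nonneg a)]

/-- `1 + a + a⋆` lies below both `(1 + a)⋆(1 + a)` and `(1 + a)(1 + a)⋆`, so `1 + a` has a left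
and a right inverse. -/
lemma isUnit_one_add_of_isStrictlyPositive {a : A} (h : IsStrictlyPositive (1 + a + star a)) :
    IsUnit (1 + a) := by
  obtain ⟨u, hu⟩ : IsUnit (star (1 + a) * (1 + a)) := by
    refine (h.of_le (le_of_sub_nonneg ?_)).isUnit
    convert star_mul_self_nonneg a using 1
    simp only [star_add, star_one]
    noncomm_ring
  obtain ⟨v, hv⟩ : IsUnit ((1 + a) * star (1 + a)) := by
    refine (h.of_le (le_of_sub_nonneg ?_)).isUnit
    convert mul_star_self_nonneg a using 1
    simp only [star_add, star_one]
    noncomm_ring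
  refine isUnit_iff_exists_and_exists.2 ⟨⟨star (1 + a) * ↑v⁻¹, ?_⟩, ⟨↑u⁻¹ * star (1 + a), ?_⟩⟩
  · rw [← mul_assoc, ← hv, Units.mul_inv]
  · rw [mul_assoc, ← hu, Units.inv_mul]

lemma norm_mul_ringInverse_one_add_lt_one {a : A} (h : IsStrictlyPositive (1 + a + star a)) :
    ‖a * (1 + a)⁻¹ʳ‖ < 1 := by
  have hu := isUnit_one_add_of_isStrictlyPositive h
  rw [← isStrictlyPositive_one_sub_star_mul_self_iff,
    one_sub_star_mul_self_of_mul_ringInverse_one_add hu,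
    hu.ringInverse.isStrictlyPositive_star_left_conjugate_iff]
  exact h

lemma isStrictlyPositive_one_add_add_star_of_norm_lt_one {a : A} (h : ‖a‖ < 1) :
    IsStrictlyPositive (1 + a * (1 - a)⁻¹ʳ + star (a * (1 - a)⁻¹ʳ)) := by
  rw [one_add_add_star_of_mul_ringInverse_one_sub (isUnit_one_sub_of_norm_lt_one h),
    (isUnit_one_sub_of_norm_lt_one h).ringInverse.isStrictlyPositive_star_left_conjugate_iff,
    isStrictlyPositive_one_sub_star_mul_self_iff]
  exact h

end CStarAlgebra

section Kronecker

variable {R l m n p : Type*} [CommSemiring R]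

lemma Matrix.sum_kronecker {ι : Type*} (s : Finset ι) (A : ι → Matrix l m R) (B : Matrix n p R) :
    (∑ i ∈ s, A i) ⊗ₖ B = ∑ i ∈ s, A i ⊗ₖ B := by
  ext; simp [Matrix.sum_apply, Finset.sum_mul]

lemma Matrix.kronecker_sum {ι : Type*} (s : Finset ι) (A : Matrix l m R) (B : ι → Matrix n p R) :
    A ⊗ₖ (∑ i ∈ s, B i) = ∑ i ∈ s, A ⊗ₖ B i := by
  ext; simp [Matrix.sum_apply, Finset.mul_sum]

end Kronecker

section Convexotonic

variable {g d n : ℕ} {J : Fin g → Matrix (Fin d) (Fin d) ℂ} {Ξ : Fin g → Matrix (Fin g) (Fin g) ℂ}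

lemma lamK_apply (A : Fin g → Matrix (Fin d) (Fin d) ℂ) (X : Fin g → Matrix (Fin n) (Fin n) ℂ)
    (p q : Fin d × Fin n) : lamK A X p q = ∑ j, A j p.1 q.1 * X j p.2 q.2 := by
  simp [lamK, Matrix.sum_apply]

lemma lamK_add (A : Fin g → Matrix (Fin d) (Fin d) ℂ) (X Y : Fin g → Matrix (Fin n) (Fin n) ℂ) :
    lamK A (X + Y) = lamK A X + lamK A Y := by
  ext; simp [lamK_apply, mul_add, Finset.sum_add_distrib]

lemma lamK_sub (A : Fin g → Matrix (Fin d) (Fin d) ℂ) (X Y : Fin g → Matrix (Fin n) (Fin n) ℂ) :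
    lamK A (X - Y) = lamK A X - lamK A Y := by
  ext; simp [lamK_apply, mul_sub, Finset.sum_sub_distrib]

lemma lamK_injective (hli : LinearIndependent ℂ J) :
    Function.Injective (lamK J : (Fin g → Matrix (Fin n) (Fin n) ℂ) → _) := by
  intro X Y h
  funext j a b
  refine Fintype.linearIndependent_iffₛ.1 hli (fun j => X j a b) (fun j => Y j a b) ?_ j
  ext p q
  simpa [lamK_apply, Matrix.sum_apply, mul_comm] using congrFun (congrFun h (p, a)) (q, b)

lemma blk_lamK (A : Fin g → Matrix (Fin g) (Fin g) ℂ) (X : Fin g → Matrix (Fin n) (Fin n) ℂ)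
    (j i : Fin g) : blk (lamK A X) j i = ∑ m, A m j i • X m := by
  ext; simp [blk, lamK_apply, Matrix.sum_apply]

lemma blk_mul (M N : Matrix (Fin g × Fin n) (Fin g × Fin n) ℂ) (j i : Fin g) :
    blk (M * N) j i = ∑ s, blk M j s * blk N s i := by
  ext; simp [blk, Matrix.mul_apply, Matrix.sum_apply, Fintype.sum_prod_type]

lemma blk_one (j i : Fin g) :
    blk (1 : Matrix (Fin g × Fin n) (Fin g × Fin n) ℂ) j i = if j = i then 1 else 0 := by
  ext a b
  by_cases h : j = i <;> simp [blk, Matrix.one_apply, h]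

/-- The tuple `X` read as the `n × gn` row `[X₁ ⋯ X_g]` and multiplied on the right by `M`;
in this notation `q(X) = X · (1 + Λ_Ξ(X))⁻¹` and `p(X) = X · (1 - Λ_Ξ(X))⁻¹`. -/
def rowMul (X : Fin g → Matrix (Fin n) (Fin n) ℂ) (M : Matrix (Fin g × Fin n) (Fin g × Fin n) ℂ) :
    Fin g → Matrix (Fin n) (Fin n) ℂ :=
  fun i => ∑ j, X j * blk M j i

lemma rowMul_one (X : Fin g → Matrix (Fin n) (Fin n) ℂ) : rowMul X 1 = X := by
  funext i
  simp [rowMul, blk_one]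

lemma rowMul_mul (X : Fin g → Matrix (Fin n) (Fin n) ℂ)
    (M N : Matrix (Fin g × Fin n) (Fin g × Fin n) ℂ) :
    rowMul X (M * N) = rowMul (rowMul X M) N := by
  funext i
  simp only [rowMul, blk_mul, Finset.mul_sum, Finset.sum_mul, ← mul_assoc]
  exact Finset.sum_comm

lemma rowMul_add (X : Fin g → Matrix (Fin n) (Fin n) ℂ)
    (M N : Matrix (Fin g × Fin n) (Fin g × Fin n) ℂ) :
    rowMul X (M + N) = rowMul X M + rowMul X N := by
  funext i
  simp only [rowMul, Pi.add_apply, ← Finset.sum_add_distrib, ← mul_add]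
  rfl

lemma rowMul_sub (X : Fin g → Matrix (Fin n) (Fin n) ℂ)
    (M N : Matrix (Fin g × Fin n) (Fin g × Fin n) ℂ) :
    rowMul X (M - N) = rowMul X M - rowMul X N := by
  funext i
  simp only [rowMul, Pi.sub_apply, ← Finset.sum_sub_distrib, ← mul_sub]
  rfl

lemma rowMul_replicateRow (w : Fin g × Fin n → ℂ) (M : Matrix (Fin g × Fin n) (Fin g × Fin n) ℂ) :
    rowMul (fun j => Matrix.replicateRow (Fin n) fun b => w (j, b)) M
      = fun i => Matrix.replicateRow (Fin n) fun b => (w ᵥ* M) (i, b) := by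
  funext i
  ext a b
  simp [rowMul, blk, Matrix.mul_apply, Matrix.sum_apply, Matrix.vecMul, dotProduct,
    Fintype.sum_prod_type]

lemma lamK_rowMul_lamK (hΞ : ∀ k j, J k * J j = ∑ s, (Ξ j) k s • J s)
    (X Y : Fin g → Matrix (Fin n) (Fin n) ℂ) :
    lamK J (rowMul X (lamK Ξ Y)) = lamK J X * lamK J Y := by
  have hrhs : lamK J X * lamK J Y = ∑ k, ∑ m, ∑ s, Ξ m k s • (J s ⊗ₖ (X k * Y m)) := by
    rw [lamK, lamK, Finset.sum_mul_sum]
    refine Finset.sum_congr rfl fun k _ => Finset.sum_congr rfl fun m _ => ?_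
    rw [← Matrix.mul_kronecker_mul, hΞ k m, Matrix.sum_kronecker]
    simp only [Matrix.smul_kronecker]
  have hlhs : lamK J (rowMul X (lamK Ξ Y)) = ∑ s, ∑ k, ∑ m, Ξ m k s • (J s ⊗ₖ (X k * Y m)) := by
    refine Finset.sum_congr rfl fun s _ => ?_
    simp only [rowMul, blk_lamK, Finset.mul_sum, mul_smul_comm, Matrix.kronecker_sum,
      Matrix.kronecker_smul]
  rw [hlhs, hrhs, Finset.sum_comm]
  exact Finset.sum_congr rfl fun k _ => Finset.sum_comm

lemma lamK_rowMul_one_add_lamK (hΞ : ∀ k j, J k * J j = ∑ s, (Ξ j) k s • J s)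
    (X W : Fin g → Matrix (Fin n) (Fin n) ℂ) :
    lamK J (rowMul W (1 + lamK Ξ X)) = lamK J W * (1 + lamK J X) := by
  rw [rowMul_add, rowMul_one, lamK_add, lamK_rowMul_lamK hΞ, mul_add, mul_one]

lemma lamK_rowMul_one_sub_lamK (hΞ : ∀ k j, J k * J j = ∑ s, (Ξ j) k s • J s)
    (X W : Fin g → Matrix (Fin n) (Fin n) ℂ) :
    lamK J (rowMul W (1 - lamK Ξ X)) = lamK J W * (1 - lamK J X) := by
  rw [rowMul_sub, rowMul_one, lamK_sub, lamK_rowMul_lamK hΞ, mul_sub, mul_one]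

/-- `w ↦ w ᵥ* M` is injective, as seen on tuples with constant rows. -/
lemma isUnit_of_lamK_rowMul_eq_mul (hli : LinearIndependent ℂ J)
    {M : Matrix (Fin g × Fin n) (Fin g × Fin n) ℂ} {N : Matrix (Fin d × Fin n) (Fin d × Fin n) ℂ}
    (hMN : ∀ W, lamK J (rowMul W M) = lamK J W * N) (hN : IsUnit N) : IsUnit M := by
  rcases isEmpty_or_nonempty (Fin n) with hn | ⟨⟨a⟩⟩
  · exact isUnit_of_subsingleton M
  rw [← Matrix.vecMul_injective_iff_isUnit]
  set rows : (Fin g × Fin n → ℂ) → Fin g → Matrix (Fin n) (Fin n) ℂ :=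
    fun w j => Matrix.replicateRow (Fin n) fun b => w (j, b)
  intro w₁ w₂ (hw : w₁ ᵥ* M = w₂ ᵥ* M)
  have hN_cancel : lamK J (rows w₁) * N = lamK J (rows w₂) * N := by
    rw [← hMN, ← hMN, rowMul_replicateRow, rowMul_replicateRow, hw]
  have hrows := lamK_injective hli (hN.mul_right_cancel hN_cancel)
  funext ⟨j, b⟩
  exact congrFun (congrFun (congrFun hrows j) a) b

lemma lamK_rowMul_inv {M : Matrix (Fin g × Fin n) (Fin g × Fin n) ℂ}
    {N : Matrix (Fin d × Fin n) (Fin d × Fin n) ℂ}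
    (hMN : ∀ W, lamK J (rowMul W M) = lamK J W * N) (hM : IsUnit M) (hN : IsUnit N)
    (X : Fin g → Matrix (Fin n) (Fin n) ℂ) :
    lamK J (rowMul X M⁻¹) = lamK J X * N⁻¹ʳ := by
  rw [← Matrix.nonsing_inv_eq_ringInverse]
  refine hN.mul_right_cancel ?_
  rw [← hMN, ← rowMul_mul, Matrix.nonsing_inv_mul _ ((Matrix.isUnit_iff_isUnit_det M).1 hM),
    rowMul_one, mul_assoc, Matrix.nonsing_inv_mul _ ((Matrix.isUnit_iff_isUnit_det N).1 hN),
    mul_one]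

lemma isUnit_one_add_lamK (hli : LinearIndependent ℂ J)
    (hΞ : ∀ k j, J k * J j = ∑ s, (Ξ j) k s • J s) {X : Fin g → Matrix (Fin n) (Fin n) ℂ}
    (h : IsUnit (1 + lamK J X)) : IsUnit (1 + lamK Ξ X) :=
  isUnit_of_lamK_rowMul_eq_mul hli (lamK_rowMul_one_add_lamK hΞ X) h

lemma isUnit_one_sub_lamK (hli : LinearIndependent ℂ J)
    (hΞ : ∀ k j, J k * J j = ∑ s, (Ξ j) k s • J s) {X : Fin g → Matrix (Fin n) (Fin n) ℂ}
    (h : IsUnit (1 - lamK J X)) : IsUnit (1 - lamK Ξ X) :=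
  isUnit_of_lamK_rowMul_eq_mul hli (lamK_rowMul_one_sub_lamK hΞ X) h

lemma lamK_qmap (hli : LinearIndependent ℂ J)
    (hΞ : ∀ k j, J k * J j = ∑ s, (Ξ j) k s • J s) {X : Fin g → Matrix (Fin n) (Fin n) ℂ}
    (h : IsUnit (1 + lamK J X)) : lamK J (qmap Ξ X) = lamK J X * (1 + lamK J X)⁻¹ʳ :=
  lamK_rowMul_inv (lamK_rowMul_one_add_lamK hΞ X) (isUnit_one_add_lamK hli hΞ h) h X

lemma lamK_pmap (hli : LinearIndependent ℂ J)
    (hΞ : ∀ k j, J k * J j = ∑ s, (Ξ j) k s • J s) {X : Fin g → Matrix (Fin n) (Fin n) ℂ}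
    (h : IsUnit (1 - lamK J X)) : lamK J (pmap Ξ X) = lamK J X * (1 - lamK J X)⁻¹ʳ :=
  lamK_rowMul_inv (lamK_rowMul_one_sub_lamK hΞ X) (isUnit_one_sub_lamK hli hΞ h) h X

lemma qmap_spec_of_posDef_lpen (hli : LinearIndependent ℂ J)
    (hΞ : ∀ k j, J k * J j = ∑ s, (Ξ j) k s • J s) {Y : Fin g → Matrix (Fin n) (Fin n) ℂ}
    (hY : (Lpen J Y).PosDef) :
    IsUnit (1 + lamK Ξ Y) ∧ ‖lamK J (qmap Ξ Y)‖ < 1 ∧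
      IsUnit (1 - lamK Ξ (qmap Ξ Y)) ∧ pmap Ξ (qmap Ξ Y) = Y := by
  have hL : IsStrictlyPositive (1 + lamK J Y + star (lamK J Y)) := hY.isStrictlyPositive
  have hS := isUnit_one_add_of_isStrictlyPositive hL
  have hq := lamK_qmap hli hΞ hS
  have hT : IsUnit (1 - lamK J (qmap Ξ Y)) := by
    rw [hq, one_sub_mul_ringInverse_one_add hS]
    exact hS.ringInverse
  refine ⟨isUnit_one_add_lamK hli hΞ hS, hq ▸ norm_mul_ringInverse_one_add_lt_one hL,
    isUnit_one_sub_lamK hli hΞ hT, lamK_injective hli ?_⟩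
  rw [lamK_pmap hli hΞ hT, hq, mul_ringInverse_one_sub_mul_ringInverse_one_add hS]

lemma pmap_spec_of_norm_lamK_lt_one (hli : LinearIndependent ℂ J)
    (hΞ : ∀ k j, J k * J j = ∑ s, (Ξ j) k s • J s) {X : Fin g → Matrix (Fin n) (Fin n) ℂ}
    (hX : ‖lamK J X‖ < 1) :
    IsUnit (1 - lamK Ξ X) ∧ (Lpen J (pmap Ξ X)).PosDef ∧
      IsUnit (1 + lamK Ξ (pmap Ξ X)) ∧ qmap Ξ (pmap Ξ X) = X := by
  have hT := isUnit_one_sub_of_norm_lt_one hX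
  have hp := lamK_pmap hli hΞ hT
  have hS : IsUnit (1 + lamK J (pmap Ξ X)) := by
    rw [hp, one_add_mul_ringInverse_one_sub hT]
    exact hT.ringInverse
  refine ⟨isUnit_one_sub_lamK hli hΞ hT, ?_, isUnit_one_add_lamK hli hΞ hS,
    lamK_injective hli ?_⟩
  · rw [← Matrix.isStrictlyPositive_iff_posDef, Lpen, ← Matrix.star_eq_conjTranspose, hp]
    exact isStrictlyPositive_one_add_add_star_of_norm_lt_one hX
  · rw [lamK_qmap hli hΞ hS, hp, mul_ringInverse_one_add_mul_ringInverse_one_sub hT]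

end Convexotonic

theorem qmap_bianalytic_interior_general {g d : ℕ}
    (J : Fin g → Matrix (Fin d) (Fin d) ℂ)
    (Ξ : Fin g → Matrix (Fin g) (Fin g) ℂ)
    (hli : LinearIndependent ℂ J)
    (hΞ : ∀ k j, J k * J j = ∑ s, (Ξ j) k s • J s)
    (n : ℕ) :
    (∀ Y : Fin g → Matrix (Fin n) (Fin n) ℂ, (Lpen J Y).PosDef →
      IsUnit (1 + lamK Ξ Y) ∧ ‖lamK J (qmap Ξ Y)‖ < 1 ∧
      IsUnit (1 - lamK Ξ (qmap Ξ Y)) ∧ pmap Ξ (qmap Ξ Y) = Y) ∧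
    (∀ X : Fin g → Matrix (Fin n) (Fin n) ℂ, ‖lamK J X‖ < 1 →
      IsUnit (1 - lamK Ξ X) ∧ (Lpen J (pmap Ξ X)).PosDef ∧
      IsUnit (1 + lamK Ξ (pmap Ξ X)) ∧ qmap Ξ (pmap Ξ X) = X) ∧
    Set.BijOn (qmap Ξ) {Y : Fin g → Matrix (Fin n) (Fin n) ℂ | (Lpen J Y).PosDef}
      {X : Fin g → Matrix (Fin n) (Fin n) ℂ | ‖lamK J X‖ < 1} := by
  have hq := fun Y (hY : (Lpen J Y).PosDef) => qmap_spec_of_posDef_lpen (n := n) hli hΞ hY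
  have hp := fun X (hX : ‖lamK J X‖ < 1) => pmap_spec_of_norm_lamK_lt_one (n := n) hli hΞ hX
  exact ⟨hq, hp, Set.InvOn.bijOn ⟨fun Y hY => (hq Y hY).2.2.2, fun X hX => (hp X hX).2.2.2⟩
    (fun Y hY => (hq Y hY).2.1) (fun X hX => (hp X hX).2.1)⟩

/-- `q(X) = X(I+Λ_Ξ(X))⁻¹` is a bijection from the interior of the
free spectrahedron `D_J(n)` onto the interior of the spectraball `B_J(n)`, with
inverse `p(X) = X(I-Λ_Ξ(X))⁻¹`. -/
theorem qmap_bianalytic_interior {g d : ℕ}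
    (J : Fin g → Matrix (Fin d) (Fin d) ℂ)
    (Ξ : Fin g → Matrix (Fin g) (Fin g) ℂ)
    (hli : LinearIndependent ℂ J)
    (hmul : ∀ k j, J k * J j ∈ Submodule.span ℂ (Set.range J))
    (hΞ : ∀ k j, J k * J j = ∑ s, (Ξ j) k s • J s)
    (n : ℕ) :
    (∀ Y : Fin g → Matrix (Fin n) (Fin n) ℂ, (Lpen J Y).PosDef →
      IsUnit (1 + lamK Ξ Y) ∧ ‖lamK J (qmap Ξ Y)‖ < 1 ∧
      IsUnit (1 - lamK Ξ (qmap Ξ Y)) ∧ pmap Ξ (qmap Ξ Y) = Y) ∧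
    (∀ X : Fin g → Matrix (Fin n) (Fin n) ℂ, ‖lamK J X‖ < 1 →
      IsUnit (1 - lamK Ξ X) ∧ (Lpen J (pmap Ξ X)).PosDef ∧
      IsUnit (1 + lamK Ξ (pmap Ξ X)) ∧ qmap Ξ (pmap Ξ X) = X) ∧
    Set.BijOn (qmap Ξ) {Y : Fin g → Matrix (Fin n) (Fin n) ℂ | (Lpen J Y).PosDef}
      {X : Fin g → Matrix (Fin n) (Fin n) ℂ | ‖lamK J X‖ < 1} :=
  qmap_bianalytic_interior_general J Ξ hli hΞ n
end
end

section
/- Spectraballs are never sv-generic free spectrahedra: for every d ≥ 1 and E ∈ M_d(ℂ)^g, and for every e ≥ 1 and C ∈ M_e(ℂ)^g such that D_C(n) = B_E(n) for all n ≥ 1, the tuple C is not sv-generic. -/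
open scoped Kronecker Matrix Matrix.Norms.L2Operator ComplexOrder

noncomputable section

/-!
Take the kernel vector `u = u¹ ≠ 0` of `I - A^* A`, `A = Λ_C(α¹)`, so `‖A u‖ = ‖u‖`, and a
contraction `B = Λ_C(β^k)`, whose range contains `v^k = B B^* v^k`. In `M₃`, the points with
superdiagonal `(α¹, 0)` and `(0, β^k)` lie in `D_C(3) = B_E(3)`, so `Λ_E(α¹)` and `Λ_E(β^k)` are
contractions. `Λ_E` of the point with superdiagonal `(α¹, β^k)` acts as these two maps on
orthogonal blocks, so that point lies in `B_E(3) = D_C(3)` as well. Testing `L_C` of it on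
`(-A u, u, -B^* u)` gives `‖A u‖² + ‖B^* u‖² ≤ ‖u‖²`, hence `B^* u = 0` and `u ⊥ v^k`. As the
`v^k` span `ℂ^e`, `u = 0`.
-/

open Matrix RCLike
open scoped MatrixOrder InnerProductSpace

section Stack

variable {𝕜 ι : Type*}

def stack (x y w : EuclideanSpace 𝕜 ι) : EuclideanSpace 𝕜 (ι × Fin 3) :=
  WithLp.toLp 2 fun p => ![x, y, w] p.2 p.1

lemma inner_stack [RCLike 𝕜] [Fintype ι] (x y w x' y' w' : EuclideanSpace 𝕜 ι) :
    ⟪stack x y w, stack x' y' w'⟫_𝕜 = ⟪x, x'⟫_𝕜 + ⟪y, y'⟫_𝕜 + ⟪w, w'⟫_𝕜 := by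
  simp [stack, PiLp.inner_apply, Fintype.sum_prod_type, Fin.sum_univ_three, Finset.sum_add_distrib]

lemma norm_stack_sq [RCLike 𝕜] [Fintype ι] (x y w : EuclideanSpace 𝕜 ι) :
    ‖stack x y w‖ ^ 2 = ‖x‖ ^ 2 + ‖y‖ ^ 2 + ‖w‖ ^ 2 := by
  simp only [← inner_self_eq_norm_sq (𝕜 := 𝕜), inner_stack, map_add]

lemma exists_eq_stack (z : EuclideanSpace 𝕜 (ι × Fin 3)) :
    ∃ x y w : EuclideanSpace 𝕜 ι, z = stack x y w :=
  ⟨WithLp.toLp 2 fun i => z (i, 0), WithLp.toLp 2 fun i => z (i, 1),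
    WithLp.toLp 2 fun i => z (i, 2), by ext ⟨i, r⟩; fin_cases r <;> rfl⟩

end Stack

variable {𝕜 : Type*} [RCLike 𝕜]

lemma add_two_re_inner_nonneg_of_norm_le {E : Type*} [NormedAddCommGroup E]
    [InnerProductSpace 𝕜 E] {a y : E} (x : E) (h : ‖a‖ ≤ ‖y‖) :
    0 ≤ ‖x‖ ^ 2 + ‖y‖ ^ 2 + 2 * re ⟪a, x⟫_𝕜 := by
  have hsq : ‖a‖ ^ 2 ≤ ‖y‖ ^ 2 := pow_le_pow_left₀ (norm_nonneg a) h 2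
  nlinarith [norm_add_sq (𝕜 := 𝕜) a x, sq_nonneg ‖a + x‖]

section MatrixForms

variable {n : Type*} [Fintype n] [DecidableEq n]

lemma re_inner_one_add_add_conjTranspose (M : Matrix n n 𝕜) (z : EuclideanSpace 𝕜 n) :
    re ⟪toEuclideanLin (1 + M + Mᴴ) z, z⟫_𝕜 = ‖z‖ ^ 2 + 2 * re ⟪toEuclideanLin M z, z⟫_𝕜 := by
  have hadj : re ⟪toEuclideanLin Mᴴ z, z⟫_𝕜 = re ⟪toEuclideanLin M z, z⟫_𝕜 := by
    rw [toEuclideanLin_conjTranspose_eq_adjoint, LinearMap.adjoint_inner_left, inner_re_symm]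
  rw [map_add, map_add, toLpLin_one, LinearMap.add_apply, LinearMap.add_apply, LinearMap.id_apply,
    inner_add_left, inner_add_left, map_add, map_add, hadj, inner_self_eq_norm_sq]
  ring

lemma Matrix.IsHermitian.posSemidef_iff_re_inner_nonneg {M : Matrix n n 𝕜} (hM : M.IsHermitian) :
    M.PosSemidef ↔ ∀ z, 0 ≤ re ⟪toEuclideanLin M z, z⟫_𝕜 := by
  rw [← isPositive_toEuclideanLin_iff, LinearMap.IsPositive, isSymmetric_toEuclideanLin_iff]
  exact and_iff_right hM

lemma Matrix.l2_opNorm_le_one_iff_s15 {m : Type*} [Fintype m] (A : Matrix m n 𝕜) :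
    ‖A‖ ≤ 1 ↔ ∀ x, ‖toEuclideanLin A x‖ ≤ ‖x‖ := by
  rw [l2_opNorm_def, ContinuousLinearMap.opNorm_le_iff zero_le_one]
  simp

lemma norm_toEuclideanLin_eq_of_conjTranspose_mul_self_apply {A : Matrix n n 𝕜}
    {x : EuclideanSpace 𝕜 n} (hx : toEuclideanLin (Aᴴ * A) x = x) :
    ‖toEuclideanLin A x‖ = ‖x‖ := by
  rw [← sq_eq_sq₀ (norm_nonneg _) (norm_nonneg _), ← inner_self_eq_norm_sq (𝕜 := 𝕜),
    ← inner_self_eq_norm_sq (𝕜 := 𝕜), ← LinearMap.adjoint_inner_right,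
    ← toEuclideanLin_conjTranspose_eq_adjoint, ← LinearMap.comp_apply, ← toLpLin_mul_same, hx]

lemma norm_le_one_of_posSemidef_one_sub_conjTranspose_mul {A : Matrix n n ℂ}
    (h : (1 - Aᴴ * A).PosSemidef) : ‖A‖ ≤ 1 := by
  have hnonneg : 0 ≤ Aᴴ * A := nonneg_iff_posSemidef.mpr (posSemidef_conjTranspose_mul_self A)
  have hle : ‖Aᴴ * A‖ ≤ 1 :=
    (CStarAlgebra.norm_le_one_iff_of_nonneg _ hnonneg).mpr (Matrix.le_iff.mpr h)
  rw [l2_opNorm_conjTranspose_mul_self] at hle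
  nlinarith [norm_nonneg A]

lemma norm_le_one_of_posSemidef_one_sub_mul_conjTranspose {A : Matrix n n ℂ}
    (h : (1 - A * Aᴴ).PosSemidef) : ‖A‖ ≤ 1 := by
  rw [← l2_opNorm_conjTranspose]
  exact norm_le_one_of_posSemidef_one_sub_conjTranspose_mul (by rwa [conjTranspose_conjTranspose])

lemma mulVec_eq_self_of_ker_one_sub_eq_span {R : Type*} [CommRing R] {M : Matrix n n R}
    {u : n → R} (h : LinearMap.ker (mulVecLin (1 - M)) = Submodule.span R {u}) : M *ᵥ u = u := by
  have hu : u ∈ LinearMap.ker (mulVecLin (1 - M)) := h ▸ Submodule.mem_span_singleton_self u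
  rw [LinearMap.mem_ker, mulVecLin_apply, sub_mulVec, one_mulVec, sub_eq_zero] at hu
  exact hu.symm

end MatrixForms

lemma eq_zero_of_forall_conjTranspose_mulVec_eq_zero {n ι : Type*} [Fintype n] [Fintype ι]
    {B : ι → Matrix n n 𝕜} {v : ι → n → 𝕜} {u : n → 𝕜}
    (hv : Submodule.span 𝕜 (Set.range v) = ⊤) (hBv : ∀ k, (B k * (B k)ᴴ) *ᵥ v k = v k)
    (hBu : ∀ k, (B k)ᴴ *ᵥ u = 0) : u = 0 := by
  have hortho : ∀ k, star u ⬝ᵥ v k = 0 := fun k => by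
    have huB : star u ᵥ* B k = 0 := by simpa [star_mulVec] using congrArg star (hBu k)
    rw [← hBv k, ← mulVec_mulVec, dotProduct_mulVec, huB, zero_dotProduct]
  obtain ⟨c, hc⟩ := (Submodule.mem_span_range_iff_exists_fun 𝕜).1 (hv ▸ Submodule.mem_top : u ∈ _)
  rw [← dotProduct_star_self_eq_zero]
  nth_rewrite 2 [← hc]
  simp [dotProduct_sum, hortho]

def superdiagTuple {g : ℕ} (γ δ : Fin g → ℂ) : Fin g → Matrix (Fin 3) (Fin 3) ℂ :=
  fun j => !![0, γ j, 0; 0, 0, δ j; 0, 0, 0]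

section Pencil

variable {g m : ℕ}

lemma lamScalar_zero (C : Fin g → Matrix (Fin m) (Fin m) ℂ) : lamScalar C 0 = 0 := by
  simp [lamScalar]

lemma isHermitian_Lpen {n : ℕ} (A : Fin g → Matrix (Fin m) (Fin m) ℂ)
    (X : Fin g → Matrix (Fin n) (Fin n) ℂ) : (Lpen A X).IsHermitian := by
  simp only [IsHermitian, Lpen, conjTranspose_add, conjTranspose_one, conjTranspose_conjTranspose]
  abel

lemma toEuclideanLin_lamK_superdiagTuple (C : Fin g → Matrix (Fin m) (Fin m) ℂ)
    (γ δ : Fin g → ℂ) (x y w : EuclideanSpace ℂ (Fin m)) :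
    toEuclideanLin (lamK C (superdiagTuple γ δ)) (stack x y w) =
      stack (toEuclideanLin (lamScalar C γ) y) (toEuclideanLin (lamScalar C δ) w) 0 := by
  ext ⟨i, r⟩
  fin_cases r <;>
    simp [stack, lamK, lamScalar, superdiagTuple, toLpLin_apply, mulVec, dotProduct,
      Fintype.sum_prod_type, Fin.sum_univ_three, Finset.mul_sum, mul_left_comm, mul_assoc]

lemma re_inner_Lpen_superdiagTuple_stack (C : Fin g → Matrix (Fin m) (Fin m) ℂ)
    (γ δ : Fin g → ℂ) (x y w : EuclideanSpace ℂ (Fin m)) :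
    re ⟪toEuclideanLin (Lpen C (superdiagTuple γ δ)) (stack x y w), stack x y w⟫_ℂ =
      ‖x‖ ^ 2 + ‖y‖ ^ 2 + ‖w‖ ^ 2 + 2 * re (⟪toEuclideanLin (lamScalar C γ) y, x⟫_ℂ
        + ⟪toEuclideanLin (lamScalar C δ) w, y⟫_ℂ) := by
  rw [Lpen, re_inner_one_add_add_conjTranspose, toEuclideanLin_lamK_superdiagTuple, inner_stack,
    norm_stack_sq, inner_zero_left, add_zero]

lemma posSemidef_Lpen_superdiagTuple_iff (C : Fin g → Matrix (Fin m) (Fin m) ℂ)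
    (γ δ : Fin g → ℂ) :
    (Lpen C (superdiagTuple γ δ)).PosSemidef ↔ ∀ x y w : EuclideanSpace ℂ (Fin m),
      0 ≤ ‖x‖ ^ 2 + ‖y‖ ^ 2 + ‖w‖ ^ 2 + 2 * re (⟪toEuclideanLin (lamScalar C γ) y, x⟫_ℂ
        + ⟪toEuclideanLin (lamScalar C δ) w, y⟫_ℂ) := by
  simp_rw [(isHermitian_Lpen C _).posSemidef_iff_re_inner_nonneg,
    ← re_inner_Lpen_superdiagTuple_stack]
  exact ⟨fun h x y w => h _, fun h z => by obtain ⟨x, y, w, rfl⟩ := exists_eq_stack z; exact h x y w⟩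

lemma norm_lamK_superdiagTuple_le_one_iff (E : Fin g → Matrix (Fin m) (Fin m) ℂ)
    (γ δ : Fin g → ℂ) :
    ‖lamK E (superdiagTuple γ δ)‖ ≤ 1 ↔ ‖lamScalar E γ‖ ≤ 1 ∧ ‖lamScalar E δ‖ ≤ 1 := by
  simp only [l2_opNorm_le_one_iff_s15, ← sq_le_sq₀ (norm_nonneg _) (norm_nonneg _)]
  constructor
  · intro h
    refine ⟨fun y => ?_, fun w => ?_⟩
    · simpa [toEuclideanLin_lamK_superdiagTuple, norm_stack_sq] using h (stack 0 y 0)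
    · simpa [toEuclideanLin_lamK_superdiagTuple, norm_stack_sq] using h (stack 0 0 w)
  · rintro ⟨hγ, hδ⟩ z
    obtain ⟨x, y, w, rfl⟩ := exists_eq_stack z
    rw [toEuclideanLin_lamK_superdiagTuple, norm_stack_sq, norm_stack_sq, norm_zero]
    nlinarith [hγ y, hδ w, sq_nonneg ‖x‖]

variable {C : Fin g → Matrix (Fin m) (Fin m) ℂ}

lemma posSemidef_Lpen_superdiagTuple_zero_right {γ : Fin g → ℂ} (hγ : ‖lamScalar C γ‖ ≤ 1) :
    (Lpen C (superdiagTuple γ 0)).PosSemidef := by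
  refine (posSemidef_Lpen_superdiagTuple_iff C γ 0).2 fun x y w => ?_
  have := add_two_re_inner_nonneg_of_norm_le (𝕜 := ℂ) x ((l2_opNorm_le_one_iff_s15 _).1 hγ y)
  simp only [lamScalar_zero, map_zero, LinearMap.zero_apply, inner_zero_left, add_zero]
  nlinarith [sq_nonneg ‖w‖]

lemma posSemidef_Lpen_superdiagTuple_zero_left {δ : Fin g → ℂ} (hδ : ‖lamScalar C δ‖ ≤ 1) :
    (Lpen C (superdiagTuple 0 δ)).PosSemidef := by
  refine (posSemidef_Lpen_superdiagTuple_iff C 0 δ).2 fun x y w => ?_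
  have := add_two_re_inner_nonneg_of_norm_le (𝕜 := ℂ) y ((l2_opNorm_le_one_iff_s15 _).1 hδ w)
  simp only [lamScalar_zero, map_zero, LinearMap.zero_apply, inner_zero_left, zero_add]
  nlinarith [sq_nonneg ‖x‖]

/-- `D_C(3)` is closed under gluing two contractive values of `Λ_C` along the superdiagonal
because `B_E(3)` is, by `norm_lamK_superdiagTuple_le_one_iff`. -/
lemma posSemidef_Lpen_superdiagTuple_of_forall_iff {d : ℕ} {E : Fin g → Matrix (Fin d) (Fin d) ℂ}
    (hCE : ∀ X : Fin g → Matrix (Fin 3) (Fin 3) ℂ, (Lpen C X).PosSemidef ↔ ‖lamK E X‖ ≤ 1)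
    {γ δ : Fin g → ℂ} (hγ : ‖lamScalar C γ‖ ≤ 1) (hδ : ‖lamScalar C δ‖ ≤ 1) :
    (Lpen C (superdiagTuple γ δ)).PosSemidef := by
  have hEγ := (norm_lamK_superdiagTuple_le_one_iff E γ 0).1
    ((hCE _).1 (posSemidef_Lpen_superdiagTuple_zero_right hγ))
  have hEδ := (norm_lamK_superdiagTuple_le_one_iff E 0 δ).1
    ((hCE _).1 (posSemidef_Lpen_superdiagTuple_zero_left hδ))
  exact (hCE _).2 ((norm_lamK_superdiagTuple_le_one_iff E γ δ).2 ⟨hEγ.1, hEδ.2⟩)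

lemma norm_sq_add_norm_sq_le_of_posSemidef_Lpen_superdiagTuple {γ δ : Fin g → ℂ}
    (h : (Lpen C (superdiagTuple γ δ)).PosSemidef) (u : EuclideanSpace ℂ (Fin m)) :
    ‖toEuclideanLin (lamScalar C γ) u‖ ^ 2 + ‖toEuclideanLin (lamScalar C δ)ᴴ u‖ ^ 2 ≤ ‖u‖ ^ 2 := by
  rw [toEuclideanLin_conjTranspose_eq_adjoint]
  set A := toEuclideanLin (lamScalar C γ)
  set B := toEuclideanLin (lamScalar C δ)
  have := (posSemidef_Lpen_superdiagTuple_iff C γ δ).1 h (-A u) u (-(LinearMap.adjoint B u))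
  rw [map_neg, inner_neg_right, inner_neg_left,
    ← LinearMap.adjoint_inner_right B (LinearMap.adjoint B u) u, norm_neg, norm_neg, map_add,
    map_neg, map_neg, inner_self_eq_norm_sq, inner_self_eq_norm_sq] at this
  linarith

lemma conjTranspose_mulVec_eq_zero_of_posSemidef_Lpen_superdiagTuple {γ δ : Fin g → ℂ}
    (h : (Lpen C (superdiagTuple γ δ)).PosSemidef) {u : Fin m → ℂ}
    (hu : ((lamScalar C γ)ᴴ * lamScalar C γ) *ᵥ u = u) : (lamScalar C δ)ᴴ *ᵥ u = 0 := by
  have hiso := norm_toEuclideanLin_eq_of_conjTranspose_mul_self_apply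
    (x := WithLp.toLp 2 u) (congrArg (WithLp.toLp 2) hu)
  have hle := norm_sq_add_norm_sq_le_of_posSemidef_Lpen_superdiagTuple h (WithLp.toLp 2 u)
  rw [hiso, add_le_iff_nonpos_right, sq_nonpos_iff, norm_eq_zero, toLpLin_toLp] at hle
  simpa using hle

end Pencil

/-- spectraballs are never sv-generic free spectrahedra. -/
theorem spectraball_not_svGeneric {g : ℕ} :
    ∀ d : ℕ, 1 ≤ d → ∀ E : Fin g → Matrix (Fin d) (Fin d) ℂ,
    ∀ e : ℕ, 1 ≤ e → ∀ C : Fin g → Matrix (Fin e) (Fin e) ℂ,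
      (∀ n : ℕ, 1 ≤ n →
        {X : Fin g → Matrix (Fin n) (Fin n) ℂ | (Lpen C X).PosSemidef} =
        {X : Fin g → Matrix (Fin n) (Fin n) ℂ | ‖lamK E X‖ ≤ 1}) →
      ¬ SvGeneric C := by
  rintro d - E e - C hDB ⟨⟨α, u, hα, -⟩, β, v, hβ, -, hv⟩
  obtain ⟨hαpsd, hu, hαker⟩ := hα 0
  have hD3 : ∀ X, (Lpen C X).PosSemidef ↔ ‖lamK E X‖ ≤ 1 := Set.ext_iff.mp (hDB 3 (by norm_num))
  refine hu (eq_zero_of_forall_conjTranspose_mulVec_eq_zero hv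
    (fun k => mulVec_eq_self_of_ker_one_sub_eq_span (hβ k).2.2) fun k => ?_)
  exact conjTranspose_mulVec_eq_zero_of_posSemidef_Lpen_superdiagTuple
    (posSemidef_Lpen_superdiagTuple_of_forall_iff hD3
      (norm_le_one_of_posSemidef_one_sub_conjTranspose_mul hαpsd)
      (norm_le_one_of_posSemidef_one_sub_mul_conjTranspose (hβ k).1))
    (mulVec_eq_self_of_ker_one_sub_eq_span hαker)
end
end

section
/- Let E_1 = I_2 and let E_2 be the 2×2 matrix with a 1 in the (1,2) entry and zeros elsewhere. Suppose Z is a 2×2 unitary matrix and Ξ = (Ξ_1, Ξ_2) is a pair of 2×2 complex matrices satisfying E_k Z E_j = Σ_{s=1}^2 (Ξ_j)_{k,s} E_s for all j,k ∈ {1,2}. Then Z = α I_2 for some α ∈ ℂ with |α| = 1, and Ξ = (α E_1, α E_2) = (α I_2, α E_2). Moreover, for this Ξ, for every n and every pair X = (X_1,X_2) of n×n complex matrices with I − αX_1 invertible, the matrix I − Λ_Ξ(X) is invertible and the convexotonic map satisfies X(I − Λ_Ξ(X))^{-1} = ( X_1(I−αX_1)^{-1}, (I−αX_1)^{-1} X_2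 (I−αX_1)^{-1} ). -/
open scoped Kronecker Matrix Matrix.Norms.L2Operator ComplexOrder

noncomputable section

/-- The tuple `E = (I₂, E₂)` with `E₂` the matrix unit in position `(1,2)`. -/
def Etup : Fin 2 → Matrix (Fin 2) (Fin 2) ℂ :=
  ![1, Matrix.single 0 1 1]

/-!
Taking `j = k = 1` in the hypothesis shows `Z = a I + b E₂`; unitarity of this upper triangular
matrix forces `|a| = 1` and `b = 0`. Then `E_k Z E_j = a E_k E_j = a Σ_s (E_j)_{k,s} E_s`, and
linear independence of `E₁, E₂` gives `Ξ_j = a E_j`. For this `Ξ`,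
`I - Λ_Ξ(X) = I ⊗ M - E₂ ⊗ αX₂` with `M = I - αX₁`, and since `E₂² = 0` its inverse is
`I ⊗ M⁻¹ + E₂ ⊗ M⁻¹αX₂M⁻¹`; the blocks of this inverse give `p(X)`.
-/

open Matrix

theorem eq_zero_and_norm_eq_one_of_unitary {Z : Matrix (Fin 2) (Fin 2) ℂ} {a b : ℂ}
    (hZ : Zᴴ * Z = 1) (hZab : Z = a • 1 + b • single 0 1 1) :
    b = 0 ∧ ‖a‖ = 1 := by
  subst hZab
  have entries : (‖a‖ : ℂ) ^ 2 = 1 ∧ (‖b‖ : ℂ) ^ 2 + (‖a‖ : ℂ) ^ 2 = 1 := by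
    simpa [mul_apply, Fin.sum_univ_two, one_apply, single_apply, Complex.conj_mul'] using
      And.intro (congr_fun₂ hZ 0 0) (congr_fun₂ hZ 1 1)
  obtain ⟨e00, e11⟩ := entries
  have ha : ‖a‖ ^ 2 = 1 := by exact_mod_cast e00
  have hb : ‖b‖ ^ 2 = 0 := by exact_mod_cast (by linear_combination e11 - e00 : (‖b‖ : ℂ) ^ 2 = 0)
  exact ⟨by simpa using hb, (pow_eq_one_iff_of_nonneg (norm_nonneg a) two_ne_zero).mp ha⟩

theorem convexotonic_Etup : Convexotonic Etup := by
  intro j k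
  fin_cases j <;> fin_cases k <;> ext a b <;> fin_cases a <;> fin_cases b <;>
    simp [Etup, mul_apply, single_apply, one_apply]

theorem linearIndependent_Etup : LinearIndependent ℂ Etup := by
  refine Fintype.linearIndependent_iffₛ.mpr fun f g h i => ?_
  fin_cases i
  · simpa [Etup, Fin.sum_univ_two] using congr_fun₂ h 0 0
  · simpa [Etup, Fin.sum_univ_two] using congr_fun₂ h 0 1

theorem eq_smul_of_convexotonic {g : ℕ} {E Ξ : Fin g → Matrix (Fin g) (Fin g) ℂ}
    (hE : Convexotonic E) (hli : LinearIndependent ℂ E) (a : ℂ)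
    (h : ∀ k j, a • (E k * E j) = ∑ s, (Ξ j) k s • E s) (j : Fin g) :
    Ξ j = a • E j := by
  ext k s
  have hks : ∑ s, (a * E j k s) • E s = ∑ s, (Ξ j) k s • E s := by
    simp only [← h, hE j k, Finset.smul_sum, smul_smul]
  exact (Fintype.linearIndependent_iffₛ.mp hli _ _ hks s).symm

theorem one_kronecker_sub_mul_eq_one {R m n : Type*} [CommRing R] [Fintype m] [DecidableEq m]
    [Fintype n] [DecidableEq n] {E : Matrix m m R} (hE : E * E = 0) {M : Matrix n n R}
    (hM : IsUnit M) (Y : Matrix n n R) :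
    (1 ⊗ₖ M - E ⊗ₖ Y) * (1 ⊗ₖ M⁻¹ + E ⊗ₖ (M⁻¹ * Y * M⁻¹)) = 1 := by
  have hMM : M * M⁻¹ = 1 := mul_nonsing_inv M ((isUnit_iff_isUnit_det M).mp hM)
  simp only [sub_mul, mul_add, ← mul_kronecker_mul, hE, hMM, one_mul, mul_one, ← Matrix.mul_assoc,
    zero_kronecker, one_kronecker_one]
  abel

theorem blk_kronecker {g n : ℕ} (K : Matrix (Fin g) (Fin g) ℂ) (A : Matrix (Fin n) (Fin n) ℂ)
    (j i : Fin g) : blk (K ⊗ₖ A) j i = K j i • A := rfl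

theorem blk_add {g n : ℕ} (M N : Matrix (Fin g × Fin n) (Fin g × Fin n) ℂ) (j i : Fin g) :
    blk (M + N) j i = blk M j i + blk N j i := rfl

theorem one_sub_lamK_smul_Etup (α : ℂ) {n : ℕ} (X : Fin 2 → Matrix (Fin n) (Fin n) ℂ) :
    1 - lamK (fun j => α • Etup j) X = 1 ⊗ₖ (1 - α • X 0) - single 0 1 1 ⊗ₖ (α • X 1) := by
  ext ⟨i, a⟩ ⟨j, b⟩
  fin_cases i <;> fin_cases j <;>
    simp [lamK, Fin.sum_univ_two, Etup, kroneckerMap_apply, one_apply]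

theorem isUnit_one_sub_lamK_and_pmap_smul_Etup (α : ℂ) {n : ℕ}
    (X : Fin 2 → Matrix (Fin n) (Fin n) ℂ) (hX : IsUnit (1 - α • X 0)) :
    IsUnit (1 - lamK (fun j => α • Etup j) X) ∧
      pmap (fun j => α • Etup j) X 0 = X 0 * (1 - α • X 0)⁻¹ ∧
      pmap (fun j => α • Etup j) X 1 = (1 - α • X 0)⁻¹ * X 1 * (1 - α • X 0)⁻¹ := by
  set M := 1 - α • X 0
  have hsq : (single 0 1 1 : Matrix (Fin 2) (Fin 2) ℂ) * single 0 1 1 = 0 :=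
    single_mul_single_of_ne 1 0 1 0 one_ne_zero 1
  have hinv := one_kronecker_sub_mul_eq_one hsq hX (α • X 1)
  rw [← one_sub_lamK_smul_Etup] at hinv
  have hMM : M * M⁻¹ = 1 := mul_nonsing_inv M ((isUnit_iff_isUnit_det M).mp hX)
  have hres : α • X 0 * M⁻¹ = M⁻¹ - 1 := by
    rw [show α • X 0 = 1 - M from (sub_sub_cancel 1 _).symm, sub_mul, one_mul, hMM]
  have hpmap1 : α • (X 0 * (M⁻¹ * X 1 * M⁻¹)) + X 1 * M⁻¹ = M⁻¹ * X 1 * M⁻¹ :=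
    calc α • (X 0 * (M⁻¹ * X 1 * M⁻¹)) + X 1 * M⁻¹
        = (α • X 0 * M⁻¹) * (X 1 * M⁻¹) + X 1 * M⁻¹ := by
          simp only [smul_mul_assoc, Matrix.mul_assoc]
      _ = M⁻¹ * X 1 * M⁻¹ := by rw [hres]; noncomm_ring
  refine ⟨IsUnit.of_mul_eq_one _ hinv, ?_, ?_⟩ <;>
    simp [pmap, inv_eq_right_inv hinv, Fin.sum_univ_two, blk_add, blk_kronecker, hpmap1]

/-- if `Z` is a `2 × 2` unitary and `E_k Z E_j = Σ_s (Ξ_j)_{k,s} E_s`,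
then `Z = α I₂` with `|α| = 1` and `Ξ = (α E₁, α E₂)`; moreover for this `Ξ`,
whenever `I - α X₁` is invertible so is `I - Λ_Ξ(X)`, and the convexotonic map is
`X(I - Λ_Ξ(X))⁻¹ = (X₁(I-αX₁)⁻¹, (I-αX₁)⁻¹ X₂ (I-αX₁)⁻¹)`. -/
theorem unitary_Z_is_scalar (Z : Matrix (Fin 2) (Fin 2) ℂ)
    (hZ : Zᴴ * Z = 1 ∧ Z * Zᴴ = 1)
    (Ξ : Fin 2 → Matrix (Fin 2) (Fin 2) ℂ)
    (hΞ : ∀ k j, Etup k * Z * Etup j = ∑ s, (Ξ j) k s • Etup s) :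
    ∃ α : ℂ, ‖α‖ = 1 ∧ Z = α • (1 : Matrix (Fin 2) (Fin 2) ℂ) ∧
      Ξ 0 = α • Etup 0 ∧ Ξ 1 = α • Etup 1 ∧
      ∀ (n : ℕ) (X : Fin 2 → Matrix (Fin n) (Fin n) ℂ),
        IsUnit (1 - α • X 0) →
          IsUnit (1 - lamK Ξ X) ∧
          pmap Ξ X 0 = X 0 * (1 - α • X 0)⁻¹ ∧
          pmap Ξ X 1 = (1 - α • X 0)⁻¹ * X 1 * (1 - α • X 0)⁻¹ := by
  have hZΞ : Z = Ξ 0 0 0 • 1 + Ξ 0 0 1 • single 0 1 1 := by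
    simpa [Etup, Fin.sum_univ_two] using hΞ 0 0
  obtain ⟨hb, hα⟩ := eq_zero_and_norm_eq_one_of_unitary hZ.1 hZΞ
  set α := Ξ 0 0 0
  have hZα : Z = α • 1 := by rw [hZΞ, hb, zero_smul, add_zero]
  have hΞα : Ξ = fun j => α • Etup j :=
    funext <| eq_smul_of_convexotonic convexotonic_Etup linearIndependent_Etup α fun k j => by
      rw [← hΞ, hZα, mul_smul_comm, mul_one, smul_mul_assoc]
  rw [hΞα]
  exact ⟨α, hα, hZα, rfl, rfl, fun n X hX => isUnit_one_sub_lamK_and_pmap_smul_Etup α X hX⟩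
end
end
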